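/- arXiv:2409.04231 — 2 statements merged into one kernel-verified Lean document; each statement's English description precedes it below -/
import Mathlib

section
/- Under the hypotheses of the previous statement (D_n(x) invertible), if f : ℝ^d → ℝ is ℓ times differentiable and R_ℓ(f, x, xᵢ) denotes the remainder of the degree-ℓ Taylor expansion of f around x evaluated at xᵢ, then Σᵢ f(xᵢ) W_{n,i}(x) = f(x) + Σᵢ R_ℓ(f, x, xᵢ) W_{n,i}(x). -/
open MeasureTheory Set Matrix

/-- Multi-indices `α ∈ {0,...,ℓ}^d` with `|α| = ∑ᵢ αᵢ ≤ ℓ`. -/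
def MIdx (d ℓ : ℕ) : Type := {α : Fin d → Fin (ℓ + 1) // ∑ i, (α i : ℕ) ≤ ℓ}

instance (d ℓ : ℕ) : Fintype (MIdx d ℓ) := by unfold MIdx; infer_instance
instance (d ℓ : ℕ) : DecidableEq (MIdx d ℓ) := by unfold MIdx; infer_instance

/-- The monomial feature vector `V(u) = (u^α / α!)_{|α| ≤ ℓ}`. -/
noncomputable def monV (d ℓ : ℕ) (v : Fin d → ℝ) (α : MIdx d ℓ) : ℝ :=
  (∏ i, v i ^ (α.1 i : ℕ)) / ∏ i, (Nat.factorial (α.1 i : ℕ) : ℝ)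

/-- Indicator `𝟙(‖xᵢ - x‖_∞ ≤ h)` (the sup norm is the norm on `Fin d → ℝ`). -/
noncomputable def lpInd (d n : ℕ) (x : Fin d → ℝ) (xs : Fin n → Fin d → ℝ) (h : ℝ)
    (i : Fin n) : ℝ :=
  if ‖xs i - x‖ ≤ h then 1 else 0

/-- The local design matrix
`D_n(x) = (1/(n h^d)) Σᵢ V((xᵢ-x)/h) V((xᵢ-x)/h)ᵀ 𝟙(‖xᵢ-x‖_∞ ≤ h)`. -/
noncomputable def lpD (d ℓ n : ℕ) (x : Fin d → ℝ) (xs : Fin n → Fin d → ℝ) (h : ℝ) :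
    Matrix (MIdx d ℓ) (MIdx d ℓ) ℝ :=
  fun a b => (1 / (n * h ^ d)) *
    ∑ i, lpInd d n x xs h i *
      (monV d ℓ (fun j => (xs i j - x j) / h) a * monV d ℓ (fun j => (xs i j - x j) / h) b)

/-- The LP(ℓ) weights `W_{n,i}(x) = (1/(n h^d)) V(0)ᵀ D_n(x)⁻¹ V((xᵢ-x)/h) 𝟙(‖xᵢ-x‖_∞ ≤ h)`. -/
noncomputable def lpW (d ℓ n : ℕ) (x : Fin d → ℝ) (xs : Fin n → Fin d → ℝ) (h : ℝ)
    (i : Fin n) : ℝ :=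
  (1 / (n * h ^ d)) * lpInd d n x xs h i *
    (monV d ℓ 0 ⬝ᵥ ((lpD d ℓ n x xs h)⁻¹ *ᵥ monV d ℓ (fun j => (xs i j - x j) / h)))


/-- Partial derivative in the `j`-th coordinate direction. -/
noncomputable def pderivCoord (d : ℕ) (j : Fin d) (g : (Fin d → ℝ) → ℝ) :
    (Fin d → ℝ) → ℝ :=
  fun y => fderiv ℝ g y (Pi.single j 1)

/-- Iterated partial derivative `∂^α = ∏ⱼ ∂ⱼ^{αⱼ}`. -/
noncomputable def multiDeriv (d : ℕ) (α : Fin d → ℕ) (g : (Fin d → ℝ) → ℝ) :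
    (Fin d → ℝ) → ℝ :=
  (List.finRange d).foldr (fun j acc => (pderivCoord d j)^[α j] acc) g

/-- Remainder of the degree-`ℓ` Taylor expansion of `f` around `x`, evaluated at `y`:
`R_ℓ(f, x, y) = f(y) − Σ_{|α| ≤ ℓ} ((y−x)^α/α!) ∂^α f(x)`. -/
noncomputable def taylorRem (d ℓ : ℕ) (f : (Fin d → ℝ) → ℝ) (x y : Fin d → ℝ) : ℝ :=
  f y - ∑ α : MIdx d ℓ,
    ((∏ j, (y j - x j) ^ (α.1 j : ℕ)) / ∏ j, (Nat.factorial (α.1 j : ℕ) : ℝ)) *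
      multiDeriv d (fun j => (α.1 j : ℕ)) f x

/-!
Taylor-expanding `f(xᵢ)` around `x`, the identity reduces to the reproduction of polynomials of
degree `≤ ℓ` by the LP weights: `Σᵢ W_{n,i}(x) V(xᵢ - x) = V(0)`. With
`D = Σᵢ wᵢ VᵢVᵢᵀ` and `W_{n,i} = wᵢ V(0)ᵀ D⁻¹ Vᵢ` this is just `Σᵢ W_{n,i} Vᵢᵀ = V(0)ᵀ D⁻¹ D`.
The bandwidth drops out because `V(h • u)_α = h^{|α|} V(u)_α` and `V(0)` is the unit vector at
`α = 0`.
-/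

namespace Matrix

variable {R ι m : Type*} [CommRing R] [Fintype ι] [Fintype m] [DecidableEq m]

theorem sum_smul_dotProduct_inv_mulVec_smul (w : ι → R) (U V : ι → m → R) (u : m → R)
    (hD : IsUnit (∑ i, w i • vecMulVec (U i) (V i)).det) :
    ∑ i, (w i * (u ⬝ᵥ (∑ k, w k • vecMulVec (U k) (V k))⁻¹ *ᵥ U i)) • V i = u := by
  set D := ∑ k, w k • vecMulVec (U k) (V k)
  calc ∑ i, (w i * (u ⬝ᵥ D⁻¹ *ᵥ U i)) • V i = (u ᵥ* D⁻¹) ᵥ* D := by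
        simp only [D, vecMul_sum, vecMul_smul, vecMul_vecMulVec, dotProduct_mulVec, smul_smul]
    _ = u := by rw [vecMul_vecMul, nonsing_inv_mul D hD, vecMul_one]

end Matrix

instance (d ℓ : ℕ) : Zero (MIdx d ℓ) := ⟨⟨0, by simp⟩⟩

@[simp]
theorem MIdx.val_zero_apply {d ℓ : ℕ} (j : Fin d) : ((0 : MIdx d ℓ).1 j : ℕ) = 0 := rfl

theorem MIdx.eq_zero_iff {d ℓ : ℕ} (α : MIdx d ℓ) : α = 0 ↔ ∀ j, (α.1 j : ℕ) = 0 := by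
  refine ⟨fun h j => by simp [h], fun h => Subtype.ext (funext fun j => Fin.ext (h j))⟩

theorem monV_smul (d ℓ : ℕ) (c : ℝ) (v : Fin d → ℝ) (α : MIdx d ℓ) :
    monV d ℓ (c • v) α = c ^ (∑ j, (α.1 j : ℕ)) * monV d ℓ v α := by
  simp only [monV, Pi.smul_apply, smul_eq_mul, mul_pow, Finset.prod_mul_distrib,
    Finset.prod_pow_eq_pow_sum, mul_div_assoc]

theorem monV_zero_apply (d ℓ : ℕ) (α : MIdx d ℓ) :
    monV d ℓ 0 α = if α = 0 then 1 else 0 := by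
  split_ifs with hα
  · simp [monV, hα]
  · obtain ⟨j, hj⟩ := not_forall.mp (mt (MIdx.eq_zero_iff α).mpr hα)
    simp only [monV, Pi.zero_apply]
    rw [Finset.prod_eq_zero (Finset.mem_univ j) (zero_pow hj), zero_div]

theorem sum_monV_zero_mul (d ℓ : ℕ) (c : MIdx d ℓ → ℝ) :
    ∑ α, monV d ℓ 0 α * c α = c 0 := by
  simp [monV_zero_apply]

theorem multiDeriv_zero (d : ℕ) (g : (Fin d → ℝ) → ℝ) : multiDeriv d (fun _ => 0) g = g := by
  simp [multiDeriv]

theorem lpD_eq_sum_smul_vecMulVec (d ℓ n : ℕ) (x : Fin d → ℝ) (xs : Fin n → Fin d → ℝ)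
    (h : ℝ) :
    lpD d ℓ n x xs h = ∑ i, (1 / (n * h ^ d) * lpInd d n x xs h i) •
      vecMulVec (monV d ℓ (fun j => (xs i j - x j) / h))
        (monV d ℓ (fun j => (xs i j - x j) / h)) := by
  ext a b
  simp only [lpD, Matrix.sum_apply, Matrix.smul_apply, vecMulVec_apply, smul_eq_mul,
    Finset.mul_sum, mul_assoc]

theorem sum_lpW_smul_monV (d ℓ n : ℕ) (x : Fin d → ℝ) (xs : Fin n → Fin d → ℝ) (h : ℝ)
    (hinv : IsUnit (lpD d ℓ n x xs h).det) :
    ∑ i, lpW d ℓ n x xs h i • monV d ℓ (fun j => (xs i j - x j) / h) = monV d ℓ 0 := by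
  rw [lpD_eq_sum_smul_vecMulVec] at hinv
  simp only [lpW, lpD_eq_sum_smul_vecMulVec]
  exact Matrix.sum_smul_dotProduct_inv_mulVec_smul _ _ _ _ hinv

theorem sum_monV_sub_mul_lpW (d ℓ n : ℕ) (x : Fin d → ℝ) (xs : Fin n → Fin d → ℝ) {h : ℝ}
    (hh : h ≠ 0) (hinv : IsUnit (lpD d ℓ n x xs h).det) (α : MIdx d ℓ) :
    ∑ i, monV d ℓ (xs i - x) α * lpW d ℓ n x xs h i = monV d ℓ 0 α := by
  have hscale : ∀ i, xs i - x = h • fun j => (xs i j - x j) / h := fun i => by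
    ext j; simp [mul_div_cancel₀ _ hh]
  have hrep := congrFun (sum_lpW_smul_monV d ℓ n x xs h hinv) α
  simp only [Finset.sum_apply, Pi.smul_apply, smul_eq_mul] at hrep
  calc ∑ i, monV d ℓ (xs i - x) α * lpW d ℓ n x xs h i
      = h ^ (∑ j, (α.1 j : ℕ)) * monV d ℓ 0 α := by
        simp only [hscale, monV_smul, ← hrep, Finset.mul_sum]
        exact Finset.sum_congr rfl fun i _ => by ring
    _ = monV d ℓ 0 α := by rw [← monV_smul, smul_zero]

theorem sum_taylorPoly_mul_lpW (d ℓ n : ℕ) (x : Fin d → ℝ) (xs : Fin n → Fin d → ℝ) {h : ℝ}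
    (hh : h ≠ 0) (hinv : IsUnit (lpD d ℓ n x xs h).det) (c : MIdx d ℓ → ℝ) :
    ∑ i, (∑ α, monV d ℓ (xs i - x) α * c α) * lpW d ℓ n x xs h i = c 0 := by
  calc ∑ i, (∑ α, monV d ℓ (xs i - x) α * c α) * lpW d ℓ n x xs h i
      = ∑ α, (∑ i, monV d ℓ (xs i - x) α * lpW d ℓ n x xs h i) * c α := by
        simp only [Finset.sum_mul]
        rw [Finset.sum_comm]
        exact Finset.sum_congr rfl fun α _ => Finset.sum_congr rfl fun i _ => by ring
    _ = c 0 := by simp only [sum_monV_sub_mul_lpW d ℓ n x xs hh hinv, sum_monV_zero_mul]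

theorem stmt_5_general (d ℓ n : ℕ) (x : Fin d → ℝ) (xs : Fin n → Fin d → ℝ) (h : ℝ) (hh : 0 < h)
    (hinv : IsUnit (lpD d ℓ n x xs h).det)
    (f : (Fin d → ℝ) → ℝ) :
    ∑ i, f (xs i) * lpW d ℓ n x xs h i =
      f x + ∑ i, taylorRem d ℓ f x (xs i) * lpW d ℓ n x xs h i := by
  have htaylor : ∀ y, f y = taylorRem d ℓ f x y +
      ∑ α : MIdx d ℓ, monV d ℓ (y - x) α * multiDeriv d (fun j => (α.1 j : ℕ)) f x := by
    intro y
    simp only [taylorRem, monV, Pi.sub_apply, sub_add_cancel]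
  have hpoly := sum_taylorPoly_mul_lpW d ℓ n x xs hh.ne' hinv
    (fun α => multiDeriv d (fun j => (α.1 j : ℕ)) f x)
  conv_lhs => enter [2, i]; rw [htaylor (xs i), add_mul]
  rw [Finset.sum_add_distrib, hpoly, add_comm]
  simp only [MIdx.val_zero_apply, multiDeriv_zero]

/-- If `D_n(x)` is invertible and `f` is `ℓ` times differentiable, then
`Σᵢ f(xᵢ) W_{n,i}(x) = f(x) + Σᵢ R_ℓ(f, x, xᵢ) W_{n,i}(x)`. -/
theorem stmt_5 (d ℓ n : ℕ) (x : Fin d → ℝ) (xs : Fin n → Fin d → ℝ) (h : ℝ) (hh : 0 < h)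
    (hinv : IsUnit (lpD d ℓ n x xs h).det)
    (f : (Fin d → ℝ) → ℝ) (hf : ContDiff ℝ (ℓ : ℕ∞) f) :
    ∑ i, f (xs i) * lpW d ℓ n x xs h i =
      f x + ∑ i, taylorRem d ℓ f x (xs i) * lpW d ℓ n x xs h i :=
  stmt_5_general d ℓ n x xs h hh hinv f
end

section
/- Let f : ℝ^d → [−L, L] be measurable with L > 0, σ > 0, and define the conditional cdf F(t|x) = Φ((t − f(x))/σ) where Φ is the standard normal cdf. If f is (L, β)-Hölder with β ∈ (0,1], i.e. |f(x) − f(y)| ≤ L‖x − y‖_∞^β, then for all x, y ∈ [0,1]^d, ∫_ℝ |F(t|x) − F(t|y)| dt ≤ L (2L/√(2πσ²) + 1) ‖x − y‖_∞^β. -/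
open MeasureTheory Set

/-- The standard normal cdf `Φ`. -/
noncomputable def stdGaussianCDF (t : ℝ) : ℝ :=
  ∫ u in Iic t, (Real.sqrt (2 * Real.pi))⁻¹ * Real.exp (-u ^ 2 / 2)

/-!
For any probability measure `μ` on `ℝ` with cdf `F`, the difference `F (t - a) - F (t - b)`
is the `μ`-mass of `Ioc (t - b) (t - a)`; by Tonelli its integral over `t` is the area between
the lines `t = u + a` and `t = u + b` weighted by `μ`, namely `b - a`. Since
`Φ ((t - m) / σ)` is the cdf of `N(0, σ²)` at `t - m`, the integral in the theorem equals
`|f x - f y|` exactly, and the Hölder bound finishes.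
-/

open ProbabilityTheory

theorem lintegral_measure_Ioc_sub (μ : Measure ℝ) [SFinite μ] (a b : ℝ) :
    ∫⁻ t, μ (Ioc (t - b) (t - a)) = ENNReal.ofReal (b - a) * μ univ := by
  have hS : MeasurableSet {p : ℝ × ℝ | p.2 ∈ Ioc (p.1 - b) (p.1 - a)} := by
    simpa using measurableSet_region_between_oc (measurable_id.sub_const b)
      (measurable_id.sub_const a) MeasurableSet.univ
  calc ∫⁻ t, μ (Ioc (t - b) (t - a))
      = volume.prod μ {p : ℝ × ℝ | p.2 ∈ Ioc (p.1 - b) (p.1 - a)} :=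
        (Measure.prod_apply hS).symm
    _ = ∫⁻ u, volume (Ico (u + a) (u + b)) ∂μ := by
        rw [Measure.prod_apply_symm hS]
        refine lintegral_congr fun u => congrArg volume (ext fun t => ?_)
        simp only [mem_preimage, mem_ofPred_eq, mem_Ioc, mem_Ico]
        constructor <;> rintro ⟨h₁, h₂⟩ <;> constructor <;> linarith
    _ = ENNReal.ofReal (b - a) * μ univ := by
        simp_rw [Real.volume_Ico, add_sub_add_left_eq_sub, lintegral_const]

theorem lintegral_ofReal_cdf_sub_cdf (μ : Measure ℝ) [IsProbabilityMeasure μ] (a b : ℝ) :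
    ∫⁻ t, ENNReal.ofReal (cdf μ (t - a) - cdf μ (t - b)) = ENNReal.ofReal (b - a) := by
  simp_rw [← StieltjesFunction.measure_Ioc, measure_cdf, lintegral_measure_Ioc_sub,
    measure_univ, mul_one]

theorem integral_abs_cdf_sub_cdf (μ : Measure ℝ) [IsProbabilityMeasure μ] (a b : ℝ) :
    ∫ t, |cdf μ (t - a) - cdf μ (t - b)| = |a - b| := by
  wlog hab : a ≤ b generalizing a b
  · simpa only [abs_sub_comm] using this b a (le_of_not_ge hab)
  have hmeas : Measurable fun t => cdf μ (t - a) - cdf μ (t - b) :=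
    ((monotone_cdf μ).measurable.comp (measurable_sub_const a)).sub
      ((monotone_cdf μ).measurable.comp (measurable_sub_const b))
  have hnonneg (t : ℝ) : 0 ≤ cdf μ (t - a) - cdf μ (t - b) :=
    sub_nonneg.2 (monotone_cdf μ (by linarith))
  simp_rw [abs_of_nonneg (hnonneg _)]
  rw [integral_eq_lintegral_of_nonneg_ae (ae_of_all _ hnonneg) hmeas.aestronglyMeasurable,
    lintegral_ofReal_cdf_sub_cdf μ a b, ENNReal.toReal_ofReal (sub_nonneg.2 hab),
    abs_sub_comm, abs_of_nonneg (sub_nonneg.2 hab)]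

theorem stdGaussianCDF_eq_cdf : stdGaussianCDF = cdf (gaussianReal 0 1) := by
  funext t
  rw [cdf_eq_real, measureReal_def, gaussianReal_apply_eq_integral _ one_ne_zero,
    ENNReal.toReal_ofReal
      (setIntegral_nonneg measurableSet_Iic fun _ _ => gaussianPDFReal_nonneg _ _ _)]
  simp [stdGaussianCDF, gaussianPDFReal]

theorem stdGaussianCDF_div (σ : ℝ) (hσ : 0 < σ) (x : ℝ) :
    stdGaussianCDF (x / σ) = cdf (gaussianReal 0 (.mk (σ ^ 2) (sq_nonneg σ))) x := by
  have h := gaussianReal_map_const_mul (μ := 0) (v := 1) σ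
  simp only [mul_zero, mul_one] at h
  rw [stdGaussianCDF_eq_cdf, cdf_eq_real, cdf_eq_real, ← h, measureReal_def, measureReal_def,
    Measure.map_apply (measurable_const_mul σ) measurableSet_Iic]
  congr 2
  ext u
  simp [le_div_iff₀ hσ, mul_comm]

theorem stmt_16_general (d : ℕ) (L σ β : ℝ) (hL : 0 < L) (hσ : 0 < σ)
    (f : (Fin d → ℝ) → ℝ)
    (hHol : ∀ x y : Fin d → ℝ, |f x - f y| ≤ L * ‖x - y‖ ^ β) :
    ∀ x ∈ Icc (0 : Fin d → ℝ) 1, ∀ y ∈ Icc (0 : Fin d → ℝ) 1,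
      ∫ t : ℝ, |stdGaussianCDF ((t - f x) / σ) - stdGaussianCDF ((t - f y) / σ)| ≤
        L * (2 * L / Real.sqrt (2 * Real.pi * σ ^ 2) + 1) * ‖x - y‖ ^ β := by
  intro x _ y _
  simp_rw [stdGaussianCDF_div σ hσ, integral_abs_cdf_sub_cdf]
  calc |f x - f y| ≤ L * ‖x - y‖ ^ β := hHol x y
    _ ≤ L * (2 * L / Real.sqrt (2 * Real.pi * σ ^ 2) + 1) * ‖x - y‖ ^ β := by
      have hC : 0 ≤ 2 * L / Real.sqrt (2 * Real.pi * σ ^ 2) := by positivity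
      rw [mul_right_comm]
      exact le_mul_of_one_le_right (by positivity) (by linarith)

/-- For `F(t|x) = Φ((t − f(x))/σ)` with `f` bounded by `L` and `(L, β)`-Hölder,
`β ∈ (0,1]`, we have
`∫_ℝ |F(t|x) − F(t|y)| dt ≤ L (2L/√(2πσ²) + 1) ‖x − y‖_∞^β` on the unit cube. -/
theorem stmt_16 (d : ℕ) (L σ β : ℝ) (hL : 0 < L) (hσ : 0 < σ)
    (hβ0 : 0 < β) (hβ1 : β ≤ 1)
    (f : (Fin d → ℝ) → ℝ) (hfm : Measurable f) (hfb : ∀ x, |f x| ≤ L)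
    (hHol : ∀ x y : Fin d → ℝ, |f x - f y| ≤ L * ‖x - y‖ ^ β) :
    ∀ x ∈ Icc (0 : Fin d → ℝ) 1, ∀ y ∈ Icc (0 : Fin d → ℝ) 1,
      ∫ t : ℝ, |stdGaussianCDF ((t - f x) / σ) - stdGaussianCDF ((t - f y) / σ)| ≤
        L * (2 * L / Real.sqrt (2 * Real.pi * σ ^ 2) + 1) * ‖x - y‖ ^ β :=
  stmt_16_general d L σ β hL hσ f hHol
end
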